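/- arXiv:2102.10173 — 2 statements merged into one kernel-verified Lean document; each statement's English description precedes it below -/
import Mathlib

section
/- Let (b₀,b₁,…) be a sequence of integers such that p⁽ⁿ⁾ does not tend to ∞, and suppose q⁽ⁿ⁾ → ∞ as n → ∞. Then the continued fraction [b₀,b₁,…] converges and its value lies in ℚ∞ = ℚ ∪ {∞}. -/
open Filter Topology OnePoint

/-- The Möbius map `z ↦ b - 1/z` on the one-point compactification `ℝ∞` of `ℝ`. -/
noncomputable def mob (b : ℤ) (z : OnePoint ℝ) : OnePoint ℝ :=
  Option.elim z ((b : ℝ) : OnePoint ℝ)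
    (fun x => if x = 0 then (∞ : OnePoint ℝ) else (((b : ℝ) - 1 / x : ℝ) : OnePoint ℝ))

/-- Value of a finite continued fraction `[b₀, …, b_m]`, i.e. `s₀(s₁(⋯ s_m(∞)))`. -/
noncomputable def cfVal : List ℤ → OnePoint ℝ
  | [] => ∞
  | b :: t => mob b (cfVal t)

/-- The `n`th convergent `v_n = S_n(∞)` of the continued fraction `[b₀, b₁, …]`. -/
noncomputable def cfConv (b : ℕ → ℤ) (n : ℕ) : OnePoint ℝ :=
  cfVal ((List.range (n + 1)).map b)

/-- `m` is a positive index at which the coefficient is `0`, `1` or `-1`. -/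
def badIdx (b : ℕ → ℤ) (m : ℕ) : Prop :=
  1 ≤ m ∧ (b m = 0 ∨ b m = 1 ∨ b m = -1)

instance (b : ℕ → ℤ) : DecidablePred (badIdx b) := fun m => by
  unfold badIdx; infer_instance

-- The singularization map `Φ` on integer sequences.
open Classical in
noncomputable def Phi (b : ℕ → ℤ) : ℕ → ℤ :=
  if h : ∃ m, badIdx b m then
    let m := Nat.find h
    if b m = 0 then
      fun k => if k + 1 < m then b k
        else if k = m - 1 then b (m - 1) + b (m + 1)
        else b (k + 2)
    else if b m = 1 then
      fun k => if k + 1 < m then b k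
        else if k = m - 1 then b (m - 1) - 1
        else if k = m then b (m + 1) - 1
        else b (k + 1)
    else
      fun k => if k + 1 < m then b k
        else if k = m - 1 then b (m - 1) + 1
        else if k = m then b (m + 1) + 1
        else b (k + 1)
  else b

-- `p(b) ∈ ℕ ∪ {∞}`: the least positive index at which `0`, `1` or `-1` occurs.
open Classical in
noncomputable def pIdx (b : ℕ → ℤ) : ℕ∞ :=
  if h : ∃ m, badIdx b m then (Nat.find h : ℕ∞) else ⊤

/-- `p⁽ⁿ⁾ → ∞` as `n → ∞`. -/
def PTendsToTop (b : ℕ → ℤ) : Prop :=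
  ∀ N : ℕ, ∃ M : ℕ, ∀ n ≥ M, (N : ℕ∞) < pIdx (Phi^[n] b)

/-- `p = liminf pⁿ`, as a natural number (junk value if the liminf is `∞`). -/
noncomputable def pLim (b : ℕ → ℤ) : ℕ :=
  (Filter.liminf (fun n => pIdx (Phi^[n] b)) Filter.atTop).toNat

/-- `q⁽ⁿ⁾ = |b⁽ⁿ⁾_{p-1}|`. -/
noncomputable def qSeq (b : ℕ → ℤ) (n : ℕ) : ℕ :=
  ((Phi^[n] b) (pLim b - 1)).natAbs

/-- Two continued fractions have the same tail. -/
def SameTail (b c : ℕ → ℤ) : Prop := ∃ r s : ℕ, ∀ k : ℕ, b (r + k) = c (s + k)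

/-- `bstar` is the limit continued fraction: each coefficient of `Φⁿ(b)` stabilises on it. -/
def EventuallyCoeff (b bstar : ℕ → ℤ) : Prop :=
  ∀ k : ℕ, ∃ N : ℕ, ∀ n ≥ N, Phi^[n] b k = bstar k

/-- The point of `ℝ∞` represented by the integer fraction `a/b` (`∞` when `b = 0`). -/
noncomputable def intPt (a b : ℤ) : OnePoint ℝ :=
  if b = 0 then ∞ else (((a : ℝ) / (b : ℝ)) : OnePoint ℝ)

/-- Adjacency in the Farey graph: `x = a/b`, `y = c/d` with `ad - bc = ±1`. -/
def FareyAdj (x y : OnePoint ℝ) : Prop :=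
  ∃ a b c d : ℤ, x = intPt a b ∧ y = intPt c d ∧
    (a * d - b * c = 1 ∨ a * d - b * c = -1)

/-- `x` is an extended rational, i.e. a member of `ℚ∞ = ℚ ∪ {∞} ⊆ ℝ∞`. -/
def IsExtRat (x : OnePoint ℝ) : Prop :=
  x = ∞ ∨ ∃ q : ℚ, x = ((q : ℝ) : OnePoint ℝ)

-- One step of the index-tracking sequence, for the current coefficient sequence `c`.
open Classical in
noncomputable def eStep (c : ℕ → ℤ) (e : ℕ) : Option ℕ :=
  if h : ∃ m, badIdx c m then
    let m := Nat.find h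
    if c m = 0 then
      if e + 2 ≤ m then Option.some e
      else if e = m - 1 ∨ e = m then (none : Option ℕ)
      else Option.some (e - 2)
    else
      if e + 2 ≤ m then Option.some e
      else if e = m - 1 then (none : Option ℕ)
      else Option.some (e - 1)
  else Option.some e

/-- The index-tracking sequence `e⁽⁰⁾(k), e⁽¹⁾(k), …` (`none` once it has terminated). -/
noncomputable def eSeq (b : ℕ → ℤ) (k : ℕ) : ℕ → Option ℕ
  | 0 => Option.some k
  | n + 1 => (eSeq b k n).bind (eStep (Phi^[n] b))


/-!
Since `p⁽ⁿ⁾ ↛ ∞`, eventually `p ≤ p⁽ⁿ⁾`, so from some point on `Φ` never touches the first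
`p - 1` coefficients: they freeze to a word `P`, and the limit is `P(∞) = [P] ∈ ℚ∞`.
Each application of `Φ` is a singularization: a Möbius identity turns the convergent of length
`ℓ > p⁽ⁿ⁾` of `Φⁿ(b)` into the convergent of length `ℓ - 1` or `ℓ - 2` of `Φⁿ⁺¹(b)`. Iterating,
every late convergent of `b` is a convergent of some `Φᵏ(b)` of length between `p - 1` and `p⁽ᵏ⁾`,
that is `P` applied to `[b⁽ᵏ⁾_{p-1}, …, b⁽ᵏ⁾_{ℓ-1}]`. All coefficients of this tail but the first
have absolute value at least `2`, so its value is `∞` or of absolute value at least `q⁽ᵏ⁾ - 1`,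
which tends to `∞`. Continuity of the Möbius maps then gives convergence to `P(∞)`.
-/

open Bornology

@[simp] lemma mob_infty (b : ℤ) : mob b ∞ = ((b : ℝ) : OnePoint ℝ) := rfl

@[simp] lemma mob_coe (b : ℤ) (x : ℝ) :
    mob b x = if x = 0 then ∞ else (((b : ℝ) - 1 / x : ℝ) : OnePoint ℝ) := rfl

noncomputable def shiftBy (c : ℤ) : OnePoint ℝ → OnePoint ℝ := OnePoint.map (· + (c : ℝ))

@[simp] lemma shiftBy_infty (c : ℤ) : shiftBy c ∞ = ∞ := rfl

@[simp] lemma shiftBy_coe (c : ℤ) (x : ℝ) : shiftBy c x = ((x + c : ℝ) : OnePoint ℝ) := rfl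

lemma continuous_shiftBy (c : ℤ) : Continuous (shiftBy c) :=
  (Homeomorph.addRight (c : ℝ)).onePointCongr.continuous

lemma shiftBy_shiftBy (a b : ℤ) (z : OnePoint ℝ) :
    shiftBy a (shiftBy b z) = shiftBy (a + b) z := by
  induction z using OnePoint.rec with
  | infty => rfl
  | coe x => simp only [shiftBy_coe, Int.cast_add]; ring_nf

lemma shiftBy_mob_zero (b : ℤ) (z : OnePoint ℝ) : shiftBy b (mob 0 z) = mob b z := by
  induction z using OnePoint.rec with
  | infty => simp
  | coe x => by_cases hx : x = 0 <;> simp [hx]; ring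

lemma mob_zero_mob_zero (z : OnePoint ℝ) : mob 0 (mob 0 z) = z := by
  induction z using OnePoint.rec with
  | infty => simp
  | coe x => by_cases hx : x = 0 <;> simp [hx]

lemma tendsto_mob_zero_cobounded :
    Tendsto (fun x : ℝ => mob 0 x) (cobounded ℝ) (𝓝 (mob 0 ∞)) := by
  have h : Tendsto (fun x : ℝ => (((0 : ℤ) : ℝ) - 1 / x : ℝ)) (cobounded ℝ) (𝓝 0) := by
    simpa using (tendsto_inv₀_cobounded (α := ℝ)).neg
  rw [mob_infty, Int.cast_zero]
  refine ((OnePoint.continuous_coe.tendsto _).comp h).congr' ?_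
  filter_upwards [eventually_ne_cobounded 0] with x hx
  simp [hx]

lemma tendsto_mob_zero_nhdsNE_zero : Tendsto (fun x : ℝ => mob 0 x) (𝓝[≠] 0) (𝓝 ∞) := by
  have h : Tendsto (fun x : ℝ => (((0 : ℤ) : ℝ) - 1 / x : ℝ)) (𝓝[≠] 0) (cobounded ℝ) := by
    simpa [Function.comp_def] using
      Filter.tendsto_neg_cobounded.comp (tendsto_inv₀_nhdsNE_zero (α := ℝ))
  rw [Metric.cobounded_eq_cocompact, ← coclosedCompact_eq_cocompact] at h
  refine (OnePoint.tendsto_coe_infty.comp h).congr' ?_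
  filter_upwards [self_mem_nhdsWithin] with x (hx : x ≠ 0)
  simp [hx]

lemma continuous_mob_zero : Continuous (mob 0) := by
  rw [OnePoint.continuous_iff, coclosedCompact_eq_cocompact, ← Metric.cobounded_eq_cocompact,
    continuous_iff_continuousAt]
  refine ⟨tendsto_mob_zero_cobounded, fun x => ?_⟩
  rcases eq_or_ne x 0 with rfl | hx
  · rw [ContinuousAt, ← nhdsNE_sup_pure, tendsto_sup]
    exact ⟨by simpa using tendsto_mob_zero_nhdsNE_zero, tendsto_pure_nhds _ _⟩
  · have : ContinuousAt (fun y : ℝ => ((((0 : ℤ) : ℝ) - 1 / y : ℝ) : OnePoint ℝ)) x :=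
      OnePoint.continuous_coe.continuousAt.comp (by fun_prop (disch := exact hx))
    refine this.congr ?_
    filter_upwards [isOpen_ne.mem_nhds hx] with y hy
    simp [hy]

lemma continuous_mob (b : ℤ) : Continuous (mob b) := by
  simpa only [Function.comp_def, shiftBy_mob_zero] using
    (continuous_shiftBy b).comp continuous_mob_zero

lemma mob_mob_zero (x : ℤ) (z : OnePoint ℝ) : mob x (mob 0 z) = shiftBy x z := by
  rw [← shiftBy_mob_zero, mob_zero_mob_zero]

lemma shiftBy_mob (c y : ℤ) (z : OnePoint ℝ) : shiftBy c (mob y z) = mob (c + y) z := by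
  rw [← shiftBy_mob_zero y, shiftBy_shiftBy, shiftBy_mob_zero]

lemma mob_mob_unit {ε : ℤ} (hε : ε = 1 ∨ ε = -1) (x : ℤ) (z : OnePoint ℝ) :
    mob x (mob ε z) = mob (x - ε) (shiftBy (-ε) z) := by
  have hεε : (ε : ℝ) * ε = 1 := by rcases hε with rfl | rfl <;> norm_num
  have hε0 : (ε : ℝ) ≠ 0 := left_ne_zero_of_mul_eq_one hεε
  have hinv : (ε : ℝ)⁻¹ = ε := inv_eq_of_mul_eq_one_right hεε
  induction z using OnePoint.rec with
  | infty =>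
    simp only [mob_infty, mob_coe, if_neg hε0, shiftBy_infty, Int.cast_sub, one_div, hinv]
  | coe u =>
    by_cases hu : u = 0
    · have : (0 : ℝ) + (-ε : ℤ) ≠ 0 := by simpa using hε0
      simp only [mob_coe, hu, if_true, mob_infty, shiftBy_coe, if_neg this]
      push_cast
      rw [zero_add, one_div, inv_neg, hinv]
      ring_nf
    by_cases huε : u = ε
    · subst huε
      simp [hε0, hinv]
    have h1 : (ε : ℝ) - 1 / u ≠ 0 := by
      intro h; apply huε; field_simp at h; linear_combination (ε : ℝ) * h - u * hεε
    have h2 : u + (-ε : ℤ) ≠ 0 := by push_cast; intro h; apply huε; linarith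
    have h3 : (ε : ℝ) * u - 1 ≠ 0 := by
      intro h; apply huε; linear_combination (ε : ℝ) * h - u * hεε
    simp only [mob_coe, hu, h1, h2, if_false, shiftBy_coe]
    push_cast at h2 ⊢
    congr 1
    field_simp
    linear_combination (u ^ 2 - ε * u + 1) * hεε

lemma cfVal_eq_foldr (l : List ℤ) : cfVal l = l.foldr mob ∞ := by
  induction l with
  | nil => rfl
  | cons a t ih => rw [cfVal, ih, List.foldr_cons]

lemma cfVal_append (l₁ l₂ : List ℤ) : cfVal (l₁ ++ l₂) = l₁.foldr mob (cfVal l₂) := by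
  rw [cfVal_eq_foldr, cfVal_eq_foldr, List.foldr_append]

lemma continuous_foldr_mob (l : List ℤ) : Continuous (fun z => l.foldr mob z) := by
  induction l with
  | nil => exact continuous_id
  | cons a t ih => exact (continuous_mob a).comp ih

lemma isExtRat_mob (b : ℤ) {z : OnePoint ℝ} (hz : IsExtRat z) : IsExtRat (mob b z) := by
  rcases hz with rfl | ⟨q, rfl⟩
  · exact Or.inr ⟨b, by simp⟩
  by_cases hq : (q : ℝ) = 0
  · exact Or.inl (by simp [hq])
  · exact Or.inr ⟨b - 1 / q, by simp [hq]⟩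

lemma isExtRat_cfVal (l : List ℤ) : IsExtRat (cfVal l) := by
  induction l with
  | nil => exact Or.inl rfl
  | cons a t ih => exact isExtRat_mob a ih

-- Indexed by length: `cfConv c n = cfTrunc c (n + 1)`.
noncomputable def cfTrunc (c : ℕ → ℤ) (ℓ : ℕ) : OnePoint ℝ := cfVal ((List.range ℓ).map c)

lemma cfTrunc_succ (c : ℕ → ℤ) (ℓ : ℕ) :
    cfTrunc c (ℓ + 1) = mob (c 0) (cfTrunc (fun i => c (i + 1)) ℓ) := by
  simp [cfTrunc, List.range_succ_eq_map, cfVal, Function.comp_def]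

lemma cfTrunc_add (c : ℕ → ℤ) (a ℓ : ℕ) :
    cfTrunc c (a + ℓ) = ((List.range a).map c).foldr mob (cfTrunc (fun i => c (a + i)) ℓ) := by
  simp [cfTrunc, List.range_add, cfVal_append, Function.comp_def]

-- The effect of `Φ` on `d i = b (m - 1 + i)`, where `m` is the first bad index and `b m = d 1`.
def singZero (d : ℕ → ℤ) (i : ℕ) : ℤ := if i = 0 then d 0 + d 2 else d (i + 2)

def singUnit (d : ℕ → ℤ) (i : ℕ) : ℤ :=
  if i = 0 then d 0 - d 1 else if i = 1 then d 2 - d 1 else d (i + 1)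

lemma cfTrunc_singZero {d : ℕ → ℤ} (hd : d 1 = 0) (ℓ : ℕ) :
    cfTrunc d (ℓ + 2) = cfTrunc (singZero d) ℓ := by
  rw [cfTrunc_succ, cfTrunc_succ, hd, mob_mob_zero]
  cases ℓ with
  | zero => rfl
  | succ k => rw [cfTrunc_succ, cfTrunc_succ, shiftBy_mob]; rfl

lemma cfTrunc_singUnit {d : ℕ → ℤ} (hd : d 1 = 1 ∨ d 1 = -1) (ℓ : ℕ) :
    cfTrunc d (ℓ + 2) = cfTrunc (singUnit d) (ℓ + 1) := by
  rw [cfTrunc_succ, cfTrunc_succ, mob_mob_unit hd, cfTrunc_succ]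
  cases ℓ with
  | zero => rfl
  | succ k =>
    rw [cfTrunc_succ, cfTrunc_succ, shiftBy_mob]
    simp [singUnit, neg_add_eq_sub]

section Singularization

variable {c : ℕ → ℤ}

lemma pIdx_of_exists (h : ∃ m, badIdx c m) : pIdx c = Nat.find h := dif_pos h

lemma Phi_of_not_exists (h : ¬∃ m, badIdx c m) : Phi c = c := dif_neg h

lemma Phi_apply_of_lt {k : ℕ} (hk : (k + 1 : ℕ∞) < pIdx c) : Phi c k = c k := by
  by_cases h : ∃ m, badIdx c m
  · rw [pIdx_of_exists h] at hk
    have hk' : k + 1 < Nat.find h := by exact_mod_cast hk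
    simp only [Phi, dif_pos h]
    split_ifs <;> simp [hk']
  · rw [Phi_of_not_exists h]

lemma Phi_shift_of_zero (h : ∃ m, badIdx c m) {n : ℕ} (hn : Nat.find h = n + 1)
    (hc : c (n + 1) = 0) : (fun i => Phi c (n + i)) = singZero (fun i => c (n + i)) := by
  funext i
  simp only [Phi, dif_pos h, singZero, hn, Nat.add_sub_cancel, hc, if_true]
  rcases i with _ | i <;> simp [add_assoc]

lemma Phi_shift_of_unit (h : ∃ m, badIdx c m) {n : ℕ} (hn : Nat.find h = n + 1)
    (hc : c (n + 1) = 1 ∨ c (n + 1) = -1) :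
    (fun i => Phi c (n + i)) = singUnit (fun i => c (n + i)) := by
  funext i
  rcases hc with hc | hc <;>
  · simp only [Phi, dif_pos h, singUnit, hn, Nat.add_sub_cancel, hc]
    rcases i with _ | _ | i <;> simp [add_assoc]

lemma two_le_abs_of_lt_pIdx {k : ℕ} (hk1 : 1 ≤ k) (hk : (k : ℕ∞) < pIdx c) : 2 ≤ |c k| := by
  have hgood : ¬badIdx c k := by
    by_cases h : ∃ m, badIdx c m
    · rw [pIdx_of_exists h] at hk
      exact Nat.find_min h (by exact_mod_cast hk)
    · exact fun hk' => h ⟨k, hk'⟩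
  simp only [badIdx, not_and, not_or] at hgood
  have := hgood hk1
  cases abs_cases (c k) <;> omega

lemma exists_cfTrunc_Phi_eq {ℓ : ℕ} (hℓ : pIdx c < ℓ) :
    ∃ ℓ', ℓ ≤ ℓ' + 2 ∧ ℓ' < ℓ ∧ cfTrunc c ℓ = cfTrunc (Phi c) ℓ' := by
  have h : ∃ m, badIdx c m := by
    by_contra h
    simp [pIdx, dif_neg h] at hℓ
  obtain ⟨n, hn⟩ : ∃ n, Nat.find h = n + 1 := Nat.exists_eq_add_one.2 (Nat.find_spec h).1
  have hp : pIdx c = (n + 1 : ℕ) := by rw [pIdx_of_exists h, hn]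
  rw [hp, Nat.cast_lt] at hℓ
  have hpre : (List.range n).map (Phi c) = (List.range n).map c :=
    List.map_congr_left fun k hk => Phi_apply_of_lt (by
      rw [hp]; exact_mod_cast (by simp at hk; omega))
  obtain ⟨j, rfl⟩ : ∃ j, ℓ = n + (j + 2) := ⟨ℓ - n - 2, by omega⟩
  rw [cfTrunc_add]
  rcases (Nat.find_spec h).2 with h0 | h1
  · rw [hn] at h0
    refine ⟨n + j, by omega, by omega, ?_⟩
    rw [cfTrunc_singZero h0, ← Phi_shift_of_zero h hn h0, cfTrunc_add (Phi c), hpre]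
  · rw [hn] at h1
    refine ⟨n + (j + 1), by omega, by omega, ?_⟩
    rw [cfTrunc_singUnit h1, ← Phi_shift_of_unit h hn h1, cfTrunc_add (Phi c) _ (j + 1), hpre]

lemma tendsto_cfTrunc_of_tendsto_Phi {l : Filter (OnePoint ℝ)}
    (h : Tendsto (cfTrunc (Phi c)) atTop l) : Tendsto (cfTrunc c) atTop l := by
  by_cases hc : ∃ m, badIdx c m
  · rw [tendsto_iff_forall_eventually_mem] at h ⊢
    intro s hs
    obtain ⟨A, hA⟩ := eventually_atTop.1 (h s hs)
    refine eventually_atTop.2 ⟨A + Nat.find hc + 2, fun ℓ hℓ => ?_⟩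
    obtain ⟨ℓ', h1, -, heq⟩ := exists_cfTrunc_Phi_eq (c := c) (ℓ := ℓ)
      (by rw [pIdx_of_exists hc]; exact_mod_cast (by omega))
    exact heq ▸ hA ℓ' (by omega)
  · rwa [Phi_of_not_exists hc] at h

lemma tendsto_cfTrunc_of_tendsto_iterate {l : Filter (OnePoint ℝ)} (n : ℕ)
    (h : Tendsto (cfTrunc (Phi^[n] c)) atTop l) : Tendsto (cfTrunc c) atTop l := by
  induction n generalizing c with
  | zero => exact h
  | succ n ih => exact tendsto_cfTrunc_of_tendsto_Phi (ih h)

lemma exists_cfTrunc_eq_iterate {p : ℕ} (hp : ∀ k, (p : ℕ∞) ≤ pIdx (Phi^[k] c)) {ℓ : ℕ}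
    (hℓ : p - 1 ≤ ℓ) : ∃ k ℓ', p - 1 ≤ ℓ' ∧ (ℓ' : ℕ∞) ≤ pIdx (Phi^[k] c) ∧
      cfTrunc c ℓ = cfTrunc (Phi^[k] c) ℓ' := by
  induction ℓ using Nat.strong_induction_on generalizing c with
  | _ ℓ ih =>
  by_cases hle : (ℓ : ℕ∞) ≤ pIdx c
  · exact ⟨0, ℓ, hℓ, hle, rfl⟩
  obtain ⟨ℓ', h1, h2, heq⟩ := exists_cfTrunc_Phi_eq (not_le.1 hle)
  have hpℓ : p < ℓ := by exact_mod_cast (hp 0).trans_lt (not_le.1 hle)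
  obtain ⟨k, ℓ'', h3, h4, heq'⟩ := ih ℓ' h2 (c := Phi c) (fun k => hp (k + 1)) (by omega)
  exact ⟨k + 1, ℓ'', h3, h4, heq.trans heq'⟩

lemma map_range_iterate_Phi {p : ℕ} (hp : ∀ k, (p : ℕ∞) ≤ pIdx (Phi^[k] c)) (n : ℕ) :
    (List.range (p - 1)).map (Phi^[n] c) = (List.range (p - 1)).map c := by
  induction n with
  | zero => rfl
  | succ n ih =>
    rw [← ih, Function.iterate_succ_apply']
    refine List.map_congr_left fun k hk =>
      Phi_apply_of_lt ((?_ : ((k + 1 : ℕ) : ℕ∞) < p).trans_le (hp n))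
    simp at hk
    exact_mod_cast (by omega)

end Singularization

def farSet (R : ℝ) : Set (OnePoint ℝ) := insert ∞ (((↑) : ℝ → OnePoint ℝ) '' {x | R ≤ |x|})

lemma farSet_mono {R R' : ℝ} (h : R ≤ R') : farSet R' ⊆ farSet R :=
  Set.insert_subset_insert (Set.image_mono fun _ hx => h.trans hx)

lemma exists_farSet_subset {W : Set (OnePoint ℝ)} (hW : W ∈ 𝓝 ∞) : ∃ R, farSet R ⊆ W := by
  rw [OnePoint.nhds_infty_eq, mem_sup, mem_map, mem_pure, coclosedCompact_eq_cocompact,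
    ← Metric.cobounded_eq_cocompact, ← comap_norm_atTop] at hW
  obtain ⟨⟨t, ht, hsub⟩, hinf⟩ := hW
  obtain ⟨R, hR⟩ := mem_atTop_sets.1 ht
  refine ⟨R, Set.insert_subset hinf ?_⟩
  rintro _ ⟨x, hx, rfl⟩
  exact hsub (hR ‖x‖ hx)

lemma mob_mem_farSet (a : ℤ) {z : OnePoint ℝ} (hz : z ∈ farSet 1) :
    mob a z ∈ farSet (|(a : ℝ)| - 1) := by
  rcases hz with rfl | ⟨y, hy, rfl⟩
  · exact Or.inr ⟨a, by simp, rfl⟩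
  have hy0 : y ≠ 0 := by rintro rfl; norm_num at hy
  refine Or.inr ⟨a - 1 / y, ?_, by simp [hy0]⟩
  have : |1 / y| ≤ 1 := by
    rw [abs_div, abs_one, div_le_one (by positivity)]; exact hy
  have := abs_sub_abs_le_abs_sub (a : ℝ) (1 / y)
  change |(a : ℝ)| - 1 ≤ |(a : ℝ) - 1 / y|
  linarith

lemma cfTrunc_mem_farSet_one {e : ℕ → ℤ} {ℓ : ℕ} (h : ∀ i < ℓ, 2 ≤ |e i|) :
    cfTrunc e ℓ ∈ farSet 1 := by
  induction ℓ generalizing e with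
  | zero => exact Set.mem_insert _ _
  | succ ℓ ih =>
    have h0 : (2 : ℝ) ≤ |(e 0 : ℝ)| := by exact_mod_cast h 0 (by omega)
    rw [cfTrunc_succ]
    exact farSet_mono (by linarith) (mob_mem_farSet _ (ih fun i hi => h _ (by omega)))

lemma cfTrunc_mem_farSet {d : ℕ → ℤ} {ℓ : ℕ} (h : ∀ i, 1 ≤ i → i < ℓ → 2 ≤ |d i|) :
    cfTrunc d ℓ ∈ farSet (|(d 0 : ℝ)| - 1) := by
  cases ℓ with
  | zero => exact Set.mem_insert _ _
  | succ ℓ =>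
    rw [cfTrunc_succ]
    exact mob_mem_farSet _ (cfTrunc_mem_farSet_one fun i hi => h _ (by omega) (by omega))

section Convergence

variable {c : ℕ → ℤ} {p : ℕ}

lemma cfTrunc_mem_image_farSet {R : ℝ} (hp : ∀ k, (p : ℕ∞) ≤ pIdx (Phi^[k] c))
    (hq : ∀ k, R + 1 ≤ |(Phi^[k] c (p - 1) : ℝ)|) {ℓ : ℕ} (hℓ : p - 1 ≤ ℓ) :
    cfTrunc c ℓ ∈ (fun z => ((List.range (p - 1)).map c).foldr mob z) '' farSet R := by
  obtain ⟨k, ℓ', h1, h2, heq⟩ := exists_cfTrunc_eq_iterate hp hℓ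
  obtain ⟨j, rfl⟩ : ∃ j, ℓ' = p - 1 + j := ⟨ℓ' - (p - 1), by omega⟩
  rw [heq, cfTrunc_add, map_range_iterate_Phi hp]
  refine ⟨_, farSet_mono (by rw [add_zero]; linarith [hq k])
    (cfTrunc_mem_farSet fun i hi1 hi => ?_), rfl⟩
  refine two_le_abs_of_lt_pIdx (by omega) (lt_of_lt_of_le ?_ h2)
  exact_mod_cast (by omega)

lemma tendsto_cfTrunc_of_tendsto_abs (hp : ∀ k, (p : ℕ∞) ≤ pIdx (Phi^[k] c))
    (hq : Tendsto (fun k => |(Phi^[k] c (p - 1) : ℝ)|) atTop atTop) :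
    Tendsto (cfTrunc c) atTop (𝓝 (cfVal ((List.range (p - 1)).map c))) := by
  set P := (List.range (p - 1)).map c
  rw [tendsto_iff_forall_eventually_mem]
  intro U hU
  have hW : (fun z => P.foldr mob z) ⁻¹' U ∈ 𝓝 ∞ :=
    (continuous_foldr_mob P).continuousAt.preimage_mem_nhds (by rwa [← cfVal_eq_foldr])
  obtain ⟨R, hR⟩ := exists_farSet_subset hW
  obtain ⟨K, hK⟩ := eventually_atTop.1 (hq.eventually_ge_atTop (R + 1))
  have hfar : Tendsto (cfTrunc (Phi^[K] c)) atTop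
      (𝓟 ((fun z => P.foldr mob z) '' farSet R)) := by
    refine tendsto_principal.2 (eventually_atTop.2 ⟨p - 1, fun ℓ hℓ => ?_⟩)
    rw [show P = _ from (map_range_iterate_Phi hp K).symm]
    refine cfTrunc_mem_image_farSet (fun k => ?_) (fun k => ?_) hℓ
    · rw [← Function.iterate_add_apply]; exact hp _
    · rw [← Function.iterate_add_apply]; exact hK _ (by omega)
  filter_upwards [tendsto_principal.1 (tendsto_cfTrunc_of_tendsto_iterate K hfar)]
    with ℓ ⟨z, hz, hzℓ⟩
  exact hzℓ ▸ hR hz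

end Convergence

lemma eventually_pLim_le_pIdx {b : ℕ → ℤ} (hp : ¬PTendsToTop b) :
    ∀ᶠ n in atTop, (pLim b : ℕ∞) ≤ pIdx (Phi^[n] b) := by
  simp only [PTendsToTop, not_forall, not_exists, not_lt, exists_prop] at hp
  obtain ⟨N, hN⟩ := hp
  have hfin : liminf (fun n => pIdx (Phi^[n] b)) atTop ≠ ⊤ :=
    ((liminf_le_of_frequently_le (frequently_atTop.2 hN)).trans_lt (ENat.natCast_lt_top N)).ne
  have hco : (pLim b : ℕ∞) = liminf (fun n => pIdx (Phi^[n] b)) atTop :=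
    ENat.natCast_toNat hfin
  rcases Nat.eq_zero_or_pos (pLim b) with h0 | hpos
  · simp [h0]
  have hlt : ((pLim b - 1 : ℕ) : ℕ∞) < liminf (fun n => pIdx (Phi^[n] b)) atTop := by
    rw [← hco]; exact_mod_cast Nat.sub_one_lt_of_lt hpos
  filter_upwards [eventually_lt_of_lt_liminf hlt] with n hn
  have := Order.add_one_le_of_lt hn
  rwa [← Nat.cast_add_one, Nat.sub_add_cancel hpos] at this

/-- **Theorem 1(ii)(a).** If `p⁽ⁿ⁾ ↛ ∞` and `q⁽ⁿ⁾ → ∞`, then `[b₀, b₁, …]` converges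
to an extended rational. -/
theorem stmt2 (b : ℕ → ℤ) (hp : ¬ PTendsToTop b)
    (hq : Filter.Tendsto (qSeq b) Filter.atTop Filter.atTop) :
    ∃ L : OnePoint ℝ, IsExtRat L ∧ Filter.Tendsto (cfConv b) Filter.atTop (nhds L) := by
  obtain ⟨N, hN⟩ := eventually_atTop.1 (eventually_pLim_le_pIdx hp)
  have hq' : Tendsto (fun k => |(Phi^[k] (Phi^[N] b) (pLim b - 1) : ℝ)|) atTop atTop := by
    refine (tendsto_natCast_atTop_atTop.comp (hq.comp (tendsto_add_atTop_nat N))).congr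
      fun k => ?_
    simp [qSeq, Function.iterate_add_apply]
  refine ⟨_, isExtRat_cfVal ((List.range (pLim b - 1)).map (Phi^[N] b)),
    (tendsto_add_atTop_iff_nat (f := cfTrunc b) 1).2 ?_⟩
  refine tendsto_cfTrunc_of_tendsto_iterate N (tendsto_cfTrunc_of_tendsto_abs (fun k => ?_) hq')
  rw [← Function.iterate_add_apply]
  exact hN _ (by omega)
end

section
/- Let u, v ∈ ℚ with u < v be adjacent vertices of the Farey graph, and let w₀, w₁, …, w_n be a finite path in the Farey graph such that w₀ lies in the open interval (u,v) and w_n lies in ℚ∞ ∖ [u,v] (or vice versa). Then some vertex w_i of the path equals u or v. -/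
open Filter Topology OnePoint

/-- `x ∈ ℝ∞` lies in the open interval `(u, v)`. -/
def InOpen (u v : ℚ) (x : OnePoint ℝ) : Prop :=
  ∃ r : ℝ, x = ((r : OnePoint ℝ)) ∧ (u : ℝ) < r ∧ r < (v : ℝ)

/-- `x ∈ ℝ∞` lies outside the closed interval `[u, v]` (with `∞` counting as outside). -/
def OutClosed (u v : ℚ) (x : OnePoint ℝ) : Prop :=
  x = ∞ ∨ ∃ r : ℝ, x = ((r : OnePoint ℝ)) ∧ (r < (u : ℝ) ∨ (v : ℝ) < r)

lemma frac_lt_aux {p q a b : ℤ} (hq : 0 < q) (hb : 0 < b)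
    (h : (p : ℝ) / q < (a : ℝ) / b) : p * b + 1 ≤ a * q := by
  have h' : (p : ℝ) * b < (a : ℝ) * q :=
    (div_lt_div_iff₀ (by exact_mod_cast hq) (by exact_mod_cast hb)).mp h
  have : p * b < a * q := by exact_mod_cast h'
  omega

lemma norm_repr (a b : ℤ) (hb : b ≠ 0) :
    ∃ a' b' : ℤ, 0 < b' ∧ ((a' : ℝ) / b' = (a : ℝ) / b) ∧
      ∀ c d : ℤ, (a' * d - b' * c = a * d - b * c ∨ a' * d - b' * c = -(a * d - b * c))
        ∧ (c * b' - d * a' = c * b - d * a ∨ c * b' - d * a' = -(c * b - d * a)) := by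
  rcases lt_or_gt_of_ne hb with h | h
  · refine ⟨-a, -b, by omega, ?_, fun c d => ⟨Or.inr (by ring), Or.inr (by ring)⟩⟩
    push_cast; rw [neg_div_neg_eq]
  · exact ⟨a, b, h, rfl, fun c d => ⟨Or.inl rfl, Or.inl rfl⟩⟩

lemma intPt_real {a b : ℤ} {r : ℝ} (h : intPt a b = (r : OnePoint ℝ)) :
    b ≠ 0 ∧ r = (a : ℝ) / b := by
  unfold intPt at h
  split_ifs at h with hb
  · exact absurd h (OnePoint.infty_ne_coe r)
  · exact ⟨hb, (OnePoint.coe_eq_coe.mp h).symm⟩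

lemma cross (u v : ℚ) (huv : u < v)
    (hadj : FareyAdj (((u : ℝ) : OnePoint ℝ)) (((v : ℝ) : OnePoint ℝ)))
    {x y : OnePoint ℝ} (hxy : FareyAdj x y)
    (hx : InOpen u v x) (hy : OutClosed u v y) : False := by
  obtain ⟨p, q, p', q', hu, hv, hdet⟩ := hadj
  obtain ⟨hq0, hur⟩ := intPt_real hu.symm
  obtain ⟨hq0', hvr⟩ := intPt_real hv.symm
  obtain ⟨P, Q, hQ, hPQ, hPd⟩ := norm_repr p q hq0
  obtain ⟨P', Q', hQ', hPQ', hPd'⟩ := norm_repr p' q' hq0'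
  have hU : (u : ℝ) = (P : ℝ) / Q := by rw [hur, hPQ]
  have hV : (v : ℝ) = (P' : ℝ) / Q' := by rw [hvr, hPQ']
  have hdetuv : Q * P' - P * Q' = 1 := by
    have huv' : (P : ℝ) / Q < (P' : ℝ) / Q' := by rw [← hU, ← hV]; exact_mod_cast huv
    have h1 : P * Q' + 1 ≤ P' * Q := frac_lt_aux hQ hQ' huv'
    rcases (hPd p' q').1 with h2 | h2 <;> rcases (hPd' P Q).2 with h3 | h3 <;>
      rcases hdet with h4 | h4 <;> linarith
  obtain ⟨a, b, c, d, hxe, hye, hdet2⟩ := hxy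
  obtain ⟨rx, hxr, hurx, hrxv⟩ := hx
  obtain ⟨hb0, hrx⟩ := intPt_real (hxe ▸ hxr)
  obtain ⟨A, B, hB, hAB, hAd⟩ := norm_repr a b hb0
  have hX : rx = (A : ℝ) / B := by rw [hrx, hAB]
  have h5 : P * B + 1 ≤ A * Q := by
    apply frac_lt_aux hQ hB; rw [← hU, ← hX]; exact hurx
  have h6 : A * Q' + 1 ≤ P' * B := by
    apply frac_lt_aux hB hQ'; rw [← hV, ← hX]; exact hrxv
  have e1 : Q * 1 ≤ Q * (P' * B - A * Q') :=
    mul_le_mul_of_nonneg_left (by linarith) hQ.le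
  have e2 : Q' * 1 ≤ Q' * (A * Q - P * B) :=
    mul_le_mul_of_nonneg_left (by linarith) hQ'.le
  have idB : B = Q * (P' * B - A * Q') + Q' * (A * Q - P * B) := by
    linear_combination (-B) * hdetuv
  have hbQQ : Q + Q' ≤ B := by linarith
  rcases hy with hinf | ⟨ry, hyr, hout⟩
  · -- y = ∞
    have hd0 : d = 0 := by
      by_contra hd
      rw [hye] at hinf
      unfold intPt at hinf
      rw [if_neg hd] at hinf
      exact OnePoint.coe_ne_infty _ hinf
    subst hd0
    have hBc : B * c = 1 ∨ B * c = -1 := by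
      rcases (hAd c 0).1 with h | h <;> rcases hdet2 with h' | h' <;>
        first | (left; linarith) | (right; linarith)
    have hdvd : B ∣ 1 := by
      rcases hBc with h | h
      · exact ⟨c, h.symm⟩
      · exact ⟨-c, by linarith⟩
    linarith [Int.le_of_dvd one_pos hdvd]
  · obtain ⟨hd0, hry⟩ := intPt_real (hye ▸ hyr)
    obtain ⟨C, D, hD, hCD, hCd⟩ := norm_repr c d hd0
    have hY : ry = (C : ℝ) / D := by rw [hry, hCD]
    have hdet4 : A * D - B * C = 1 ∨ A * D - B * C = -1 := by
      rcases (hAd c d).1 with h | h <;> rcases (hCd A B).2 with h' | h' <;>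
        rcases hdet2 with h'' | h'' <;>
        first | (left; linarith) | (right; linarith)
    rcases hout with hlt | hgt
    · -- ry < u
      have h7 : C * Q + 1 ≤ P * D := by
        apply frac_lt_aux hD hQ; rw [← hU, ← hY]; exact hlt
      have h8 : C * B + 1 ≤ A * D := by
        apply frac_lt_aux hD hB; rw [← hX, ← hY]
        calc ry < (u : ℝ) := hlt
          _ < rx := hurx
      have hdeq : A * D - B * C = 1 := by rcases hdet4 with h | h <;> linarith
      have e3 : D * 1 ≤ D * (A * Q - P * B) :=
        mul_le_mul_of_nonneg_left (by linarith) hD.le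
      have e4 : B * 1 ≤ B * (P * D - C * Q) :=
        mul_le_mul_of_nonneg_left (by linarith) hB.le
      have idQ : Q = D * (A * Q - P * B) + B * (P * D - C * Q) := by
        linear_combination (-Q) * hdeq
      linarith
    · -- v < ry
      have h7 : P' * D + 1 ≤ C * Q' := by
        apply frac_lt_aux hQ' hD; rw [← hV, ← hY]; exact hgt
      have h8 : A * D + 1 ≤ C * B := by
        apply frac_lt_aux hB hD; rw [← hX, ← hY]
        calc rx < (v : ℝ) := hrxv
          _ < ry := hgt
      have hdeq : A * D - B * C = -1 := by rcases hdet4 with h | h <;> linarith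
      have e5 : B * 1 ≤ B * (C * Q' - P' * D) :=
        mul_le_mul_of_nonneg_left (by linarith) hB.le
      have e6 : D * 1 ≤ D * (P' * B - A * Q') :=
        mul_le_mul_of_nonneg_left (by linarith) hD.le
      have idQ' : Q' = B * (C * Q' - P' * D) + D * (P' * B - A * Q') := by
        linear_combination Q' * hdeq
      linarith

lemma FareyAdj.symm' {x y : OnePoint ℝ} (h : FareyAdj x y) : FareyAdj y x := by
  obtain ⟨a, b, c, d, hx, hy, hd⟩ := h
  refine ⟨c, d, a, b, hy, hx, ?_⟩
  rcases hd with h | h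
  · right; linarith
  · left; linarith

lemma trichot (u v : ℚ) (x : OnePoint ℝ) :
    x = ((u : ℝ) : OnePoint ℝ) ∨ x = ((v : ℝ) : OnePoint ℝ) ∨
      InOpen u v x ∨ OutClosed u v x := by
  cases x with
  | infty => right; right; right; left; rfl
  | coe r =>
    rcases lt_trichotomy r (u : ℝ) with h | h | h
    · right; right; right; right; exact ⟨r, rfl, Or.inl h⟩
    · left; exact OnePoint.coe_eq_coe.mpr h
    · rcases lt_trichotomy r (v : ℝ) with h' | h' | h'
      · right; right; left; exact ⟨r, rfl, h, h'⟩
      · right; left; exact OnePoint.coe_eq_coe.mpr h'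
      · right; right; right; right; exact ⟨r, rfl, Or.inr h'⟩

lemma not_in_and_out (u v : ℚ) (huv : u < v) (x : OnePoint ℝ)
    (h1 : InOpen u v x) (h2 : OutClosed u v x) : False := by
  obtain ⟨r, hr, h1a, h1b⟩ := h1
  rcases h2 with h | ⟨s, hs, h2'⟩
  · rw [hr] at h; exact OnePoint.coe_ne_infty r h
  · rw [hr] at hs
    have : r = s := OnePoint.coe_eq_coe.mp hs
    subst this
    rcases h2' with h | h <;> linarith

/-- **Lemma 1.** If `u < v` are adjacent vertices of the Farey graph and a finite path has
one endpoint strictly between `u` and `v` and the other outside `[u, v]`, then the path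
passes through `u` or `v`. -/
theorem stmt7 (u v : ℚ) (huv : u < v)
    (hadj : FareyAdj (((u : ℝ) : OnePoint ℝ)) (((v : ℝ) : OnePoint ℝ)))
    (n : ℕ) (w : ℕ → OnePoint ℝ) (hw : ∀ i : ℕ, i < n → FareyAdj (w i) (w (i + 1)))
    (hends : (InOpen u v (w 0) ∧ OutClosed u v (w n)) ∨
             (OutClosed u v (w 0) ∧ InOpen u v (w n))) :
    ∃ i : ℕ, i ≤ n ∧ (w i = ((u : ℝ) : OnePoint ℝ) ∨ w i = ((v : ℝ) : OnePoint ℝ)) := by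
  by_contra hcon
  push_neg at hcon
  have key : ∀ (w' : ℕ → OnePoint ℝ),
      (∀ i : ℕ, i < n → FareyAdj (w' i) (w' (i + 1))) →
      (∀ i : ℕ, i ≤ n → w' i ≠ ((u : ℝ) : OnePoint ℝ) ∧ w' i ≠ ((v : ℝ) : OnePoint ℝ)) →
      InOpen u v (w' 0) → ∀ i : ℕ, i ≤ n → InOpen u v (w' i) := by
    intro w' hw' hne h0 i
    induction i with
    | zero => intro _; exact h0
    | succ i ih =>
      intro hi
      have hin : i < n := Nat.lt_of_succ_le hi
      have hprev := ih (Nat.le_of_lt hin)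
      rcases trichot u v (w' (i + 1)) with h | h | h | h
      · exact absurd h (hne (i + 1) hi).1
      · exact absurd h (hne (i + 1) hi).2
      · exact h
      · exact absurd (cross u v huv hadj (hw' i hin) hprev h) (fun f => f)
  rcases hends with ⟨h0, hn⟩ | ⟨h0, hn⟩
  · have := key w hw (fun i hi => hcon i hi) h0 n le_rfl
    exact not_in_and_out u v huv (w n) this hn
  · have key' := key (fun i => w (n - i)) ?_ ?_ ?_ n le_rfl
    · simp only [Nat.sub_self] at key'
      exact not_in_and_out u v huv (w 0) key' h0
    · intro i hi
      show FareyAdj (w (n - i)) (w (n - (i + 1)))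
      have h1 : n - i = (n - (i + 1)) + 1 := by omega
      rw [h1]
      exact (hw (n - (i + 1)) (by omega)).symm'
    · intro i hi
      exact hcon (n - i) (by omega)
    · simp only [Nat.sub_zero]
      exact hn
end
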